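/- arXiv:1810.08325 — 3 statements merged into one kernel-verified Lean document; each statement's English description precedes it below -/
import Mathlib

section
/- Let r, s be positive integers and let G be an ordered graph with the property that every coloring of the vertices of G with r colors contains a monotone path with s edges all of whose vertices receive the same color. Then every red-blue coloring of the edges of G contains a red monotone path with r edges or a blue monotone path with s edges. In particular, r̃(P_r, P_s) ≤ |E(G)|. -/
/-- A monotone (increasing) path with `ℓ` edges in an ordered graph `G` on vertex set
`Fin n`. -/
def IsMonoPath {n ℓ : ℕ} (G : SimpleGraph (Fin n)) (v : Fin (ℓ + 1) → Fin n) : Prop :=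
  StrictMono v ∧ ∀ i : Fin ℓ, G.Adj (v i.castSucc) (v i.succ)

/-- `G` contains a monotone path with `ℓ` edges all of which get the value `b`
under the red-blue edge coloring `col`. -/
def HasPath {n : ℕ} (G : SimpleGraph (Fin n)) (ℓ : ℕ)
    (col : Fin n → Fin n → Bool) (b : Bool) : Prop :=
  ∃ v : Fin (ℓ + 1) → Fin n, IsMonoPath G v ∧
    ∀ i : Fin ℓ, col (v i.castSucc) (v i.succ) = b

/-- The ordered size Ramsey number `r̃(P_r, P_s)`. -/
noncomputable def orderedSizeRamsey (r s : ℕ) : ℕ :=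
  sInf { m | ∃ (n : ℕ) (G : SimpleGraph (Fin n)), G.edgeSet.ncard = m ∧
    ∀ col : Fin n → Fin n → Bool, HasPath G r col true ∨ HasPath G s col false }

/-- There is a red monotone path of length `k` ending at `u`. -/
def Pred {n : ℕ} (G : SimpleGraph (Fin n)) (col : Fin n → Fin n → Bool) (k : ℕ)
    (u : Fin n) : Prop :=
  ∃ w : Fin (k + 1) → Fin n, IsMonoPath G w ∧
    (∀ i : Fin k, col (w i.castSucc) (w i.succ) = true) ∧ w (Fin.last k) = u

lemma pred_zero {n : ℕ} (G : SimpleGraph (Fin n)) (col : Fin n → Fin n → Bool) (u : Fin n) :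
    Pred G col 0 u := by
  refine ⟨fun _ => u, ⟨fun a b hab => ?_, fun i => i.elim0⟩, fun i => i.elim0, rfl⟩
  · have := a.isLt; have := b.isLt
    rw [Fin.lt_def] at hab; omega

lemma card_le {n k : ℕ} {w : Fin (k + 1) → Fin n} (hw : StrictMono w) : k + 1 ≤ n := by
  simpa using Fintype.card_le_of_injective w hw.injective

lemma pred_extend {n : ℕ} {G : SimpleGraph (Fin n)} {col : Fin n → Fin n → Bool}
    {k : ℕ} {u x : Fin n} (h : Pred G col k u) (hux : u < x) (hadj : G.Adj u x)
    (hcol : col u x = true) : Pred G col (k + 1) x := by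
  obtain ⟨w, ⟨hmono, hadjw⟩, hcolw, hend⟩ := h
  refine ⟨Fin.snoc w x, ⟨?_, ?_⟩, ?_, by simp⟩
  · rw [Fin.strictMono_iff_lt_succ]
    intro i
    induction i using Fin.lastCases with
    | last => simpa [Fin.succ_last, hend] using hux
    | cast j =>
        rw [Fin.succ_castSucc]
        simp only [Fin.snoc_castSucc]; exact hmono (Fin.castSucc_lt_succ : j.castSucc < j.succ)
  · intro i
    induction i using Fin.lastCases with
    | last => simpa [Fin.succ_last, hend] using hadj
    | cast j =>
        rw [Fin.succ_castSucc]
        simp only [Fin.snoc_castSucc]; exact hadjw j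
  · intro i
    induction i using Fin.lastCases with
    | last => simpa [Fin.succ_last, hend] using hcol
    | cast j =>
        rw [Fin.succ_castSucc]
        simp only [Fin.snoc_castSucc]; exact hcolw j

lemma pred_prefix {n : ℕ} {G : SimpleGraph (Fin n)} {col : Fin n → Fin n → Bool}
    {r m : ℕ} {u : Fin n} (hrm : r ≤ m) (h : Pred G col m u) :
    HasPath G r col true := by
  obtain ⟨w, ⟨hmono, hadjw⟩, hcolw, -⟩ := h
  have hle : r + 1 ≤ m + 1 := by omega
  refine ⟨fun i => w (Fin.castLE hle i), ⟨?_, ?_⟩, ?_⟩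
  · intro a b hab
    exact hmono (by rwa [Fin.lt_def] at hab ⊢)
  · intro i
    have h1 : Fin.castLE hle i.castSucc = (Fin.castLE (by omega : r ≤ m) i).castSucc := rfl
    have h2 : Fin.castLE hle i.succ = (Fin.castLE (by omega : r ≤ m) i).succ := rfl
    show G.Adj (w (Fin.castLE hle i.castSucc)) (w (Fin.castLE hle i.succ))
    rw [h1, h2]; exact hadjw _
  · intro i
    have h1 : Fin.castLE hle i.castSucc = (Fin.castLE (by omega : r ≤ m) i).castSucc := rfl
    have h2 : Fin.castLE hle i.succ = (Fin.castLE (by omega : r ≤ m) i).succ := rfl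
    show col (w (Fin.castLE hle i.castSucc)) (w (Fin.castLE hle i.succ)) = true
    rw [h1, h2]; exact hcolw _

theorem stmt_10 (r s : ℕ) (hr : 0 < r) (hs : 0 < s) (n : ℕ) (G : SimpleGraph (Fin n))
    (hvert : ∀ vcol : Fin n → Fin r, ∃ v : Fin (s + 1) → Fin n,
      IsMonoPath G v ∧ ∀ i : Fin (s + 1), vcol (v i) = vcol (v 0)) :
    (∀ col : Fin n → Fin n → Bool, HasPath G r col true ∨ HasPath G s col false) ∧
    orderedSizeRamsey r s ≤ G.edgeSet.ncard := by
  have main : ∀ col : Fin n → Fin n → Bool, HasPath G r col true ∨ HasPath G s col false := by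
    intro col
    classical
    by_cases hred : HasPath G r col true
    · exact Or.inl hred
    · right
      set f : Fin n → ℕ := fun v => Nat.findGreatest (fun k => Pred G col k v) n with hf
      have hPf : ∀ v, Pred G col (f v) v := fun v =>
        Nat.findGreatest_spec (P := fun k => Pred G col k v) (Nat.zero_le n) (pred_zero G col v)
      have hflt : ∀ v, f v < r := by
        intro v
        by_contra hc
        push_neg at hc
        exact hred (pred_prefix hc (hPf v))
      obtain ⟨w, hw, hconst⟩ := hvert (fun v => ⟨f v, hflt v⟩)
      refine ⟨w, hw, ?_⟩
      intro i
      by_contra hb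
      rw [Bool.not_eq_false] at hb
      have hlt : w i.castSucc < w i.succ := hw.1 (Fin.castSucc_lt_succ : i.castSucc < i.succ)
      have hext : Pred G col (f (w i.castSucc) + 1) (w i.succ) :=
        pred_extend (hPf _) hlt (hw.2 i) hb
      have hcard : f (w i.castSucc) + 1 + 1 ≤ n := by
        obtain ⟨w2, ⟨hm2, -⟩, -, -⟩ := hext
        exact card_le hm2
      have hge : f (w i.castSucc) + 1 ≤ f (w i.succ) :=
        Nat.le_findGreatest (by omega) hext
      have h1 : f (w i.castSucc) = f (w 0) := congrArg Fin.val (hconst i.castSucc)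
      have h2 : f (w i.succ) = f (w 0) := congrArg Fin.val (hconst i.succ)
      omega
  exact ⟨main, Nat.sInf_le ⟨n, G, rfl, main⟩⟩
end

section
/- For all integers n ≥ 2 and q ≥ 2, every ordered graph G with at most n^{2q−1} / (2^{2q−1} · (q−1)!) edges admits a coloring of its edges with q colors containing no monotone path with n edges all of whose edges have the same color. Consequently, the q-color ordered size Ramsey number satisfies r̃(P_n; q) ≥ n^{2q−1} / (2^{2q−1} · (q−1)!). -/
/-- `G` contains a monotone path with `ℓ` edges all of which get the color `c`
under the `q`-coloring `col` of the edges. -/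
def HasPathMulti {n q : ℕ} (G : SimpleGraph (Fin n)) (ℓ : ℕ)
    (col : Fin n → Fin n → Fin q) (c : Fin q) : Prop :=
  ∃ v : Fin (ℓ + 1) → Fin n, IsMonoPath G v ∧
    ∀ i : Fin ℓ, col (v i.castSucc) (v i.succ) = c

/-- The `q`-color ordered size Ramsey number `r̃(P_n; q)`: the minimum number of edges
in an ordered graph such that every `q`-coloring of its edges contains a monochromatic
monotone path with `n` edges. -/
noncomputable def orderedSizeRamseyMulti (n q : ℕ) : ℕ :=
  sInf { m | ∃ (N : ℕ) (G : SimpleGraph (Fin N)), G.edgeSet.ncard = m ∧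
    ∀ col : Fin N → Fin N → Fin q, ∃ c : Fin q, HasPathMulti G n col c }



namespace Stmt12Core

open scoped Classical

variable {n q : ℕ}

/-- total weight of a vector -/
def wt (z : Fin q → Fin n) : ℕ := ∑ c, (z c : ℕ)

/-- encoding key: refines strict domination -/
noncomputable def key (z : Fin q → Fin n) : ℕ :=
  wt z * Fintype.card (Fin q → Fin n) + (Fintype.equivFin (Fin q → Fin n) z : ℕ)

lemma key_inj : Function.Injective (key (n := n) (q := q)) := by
  intro z w h
  have hC : ((Fintype.equivFin (Fin q → Fin n)) z : ℕ) < Fintype.card (Fin q → Fin n) :=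
    (Fintype.equivFin (Fin q → Fin n) z).2
  have hC' : ((Fintype.equivFin (Fin q → Fin n)) w : ℕ) < Fintype.card (Fin q → Fin n) :=
    (Fintype.equivFin (Fin q → Fin n) w).2
  have h2 : ((Fintype.equivFin (Fin q → Fin n)) z : ℕ) = ((Fintype.equivFin (Fin q → Fin n)) w : ℕ) := by
    unfold key at h
    set C := Fintype.card (Fin q → Fin n) with hCdef
    set ez := ((Fintype.equivFin (Fin q → Fin n)) z : ℕ) with hez
    set ew := ((Fintype.equivFin (Fin q → Fin n)) w : ℕ) with hew
    have hm : (ez + wt z * C) % C = (ew + wt w * C) % C := by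
      rw [Nat.add_comm ez, Nat.add_comm ew]
      exact congrArg (· % C) h
    rwa [Nat.add_mul_mod_self_right, Nat.add_mul_mod_self_right,
      Nat.mod_eq_of_lt hC, Nat.mod_eq_of_lt hC'] at hm
  have := (Fintype.equivFin (Fin q → Fin n)).injective (Fin.ext h2)
  exact this

lemma wt_lt_of_lt {z w : Fin q → Fin n} (hle : z ≤ w) (hne : z ≠ w) : wt z < wt w := by
  obtain ⟨c, hc⟩ : ∃ c, z c ≠ w c := by
    by_contra h
    push_neg at h
    exact hne (funext h)
  apply Finset.sum_lt_sum
  · intro i _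
    exact_mod_cast hle i
  · exact ⟨c, Finset.mem_univ c, by
      have := hle c
      have : (z c : ℕ) < (w c : ℕ) := lt_of_le_of_ne (by exact_mod_cast this)
        (fun h => hc (Fin.ext h))
      exact this⟩

lemma key_lt_of_wt_lt {z w : Fin q → Fin n} (h : wt z < wt w) : key z < key w := by
  unfold key
  have hC : ((Fintype.equivFin (Fin q → Fin n)) z : ℕ) < Fintype.card (Fin q → Fin n) :=
    (Fintype.equivFin (Fin q → Fin n) z).2
  nlinarith [Nat.le_of_lt_succ (Nat.lt_succ_of_lt hC)]

lemma key_lt_of_lt {z w : Fin q → Fin n} (hle : z ≤ w) (hne : z ≠ w) : key z < key w :=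
  key_lt_of_wt_lt (wt_lt_of_lt hle hne)

lemma key_le_of_le {z w : Fin q → Fin n} (hle : z ≤ w) : key z ≤ key w := by
  by_cases h : z = w
  · exact le_of_eq (congrArg _ h)
  · exact le_of_lt (key_lt_of_lt hle h)

lemma key_lt_of_wt_eq {z w : Fin q → Fin n} (hwt : wt z = wt w) (hk : key z < key w)
    (hle : z ≤ w) : z = w := by
  by_contra h
  exact absurd hwt (Nat.ne_of_lt (wt_lt_of_lt hle h))

end Stmt12Core

namespace Greedy

open scoped Classical
open Stmt12Core

variable {n q N : ℕ}

noncomputable def pick (hn : 0 < n) (S : Finset (Fin q → Fin n)) : Fin q → Fin n :=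
  if h : S.Nonempty then (Finset.exists_min_image S key h).choose else fun _ => ⟨0, hn⟩

lemma pick_mem (hn : 0 < n) {S : Finset (Fin q → Fin n)} (h : S.Nonempty) :
    pick hn S ∈ S := by
  rw [pick, dif_pos h]
  exact (Finset.exists_min_image S key h).choose_spec.1

lemma pick_min (hn : 0 < n) {S : Finset (Fin q → Fin n)} (h : S.Nonempty) :
    ∀ y ∈ S, key (pick hn S) ≤ key y := by
  rw [pick, dif_pos h]
  exact (Finset.exists_min_image S key h).choose_spec.2

noncomputable def Fgr (hn : 0 < n) (G : SimpleGraph (Fin N)) (v : Fin N) :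
    Fin q → Fin n :=
  pick hn (Finset.univ.filter (fun z : Fin q → Fin n =>
    ∀ u : Fin N, u < v → G.Adj u v →
      ¬ (z ≤ (if h : u < v then Fgr hn G u else fun _ => ⟨0, hn⟩))))
termination_by v.val
decreasing_by all_goals exact Fin.lt_iff_val_lt_val.mp (by assumption)

variable (hn : 0 < n) (G : SimpleGraph (Fin N))

/-- the valid set at `v` -/
noncomputable def VS (v : Fin N) : Finset (Fin q → Fin n) :=
  Finset.univ.filter (fun z : Fin q → Fin n =>
    ∀ u : Fin N, u < v → G.Adj u v → ¬ (z ≤ Fgr hn G u))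

lemma Fgr_eq (v : Fin N) : (Fgr hn G v : Fin q → Fin n) = pick hn (VS hn G v) := by
  have hfil : (Finset.univ.filter (fun z : Fin q → Fin n =>
      ∀ u : Fin N, u < v → G.Adj u v →
        ¬ (z ≤ (if h : u < v then Fgr hn G u else fun _ => ⟨0, hn⟩)))) =
      (Finset.univ.filter (fun z : Fin q → Fin n =>
      ∀ u : Fin N, u < v → G.Adj u v → ¬ (z ≤ Fgr hn G u))) := by
    apply Finset.filter_congr
    intro z _
    constructor
    · intro h u h1 h2
      have := h u h1 h2
      rwa [dif_pos h1] at this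
    · intro h u h1 h2
      rw [dif_pos h1]
      exact h u h1 h2
  rw [Fgr, VS, hfil]

lemma VS_mem_iff {v : Fin N} {z : Fin q → Fin n} :
    z ∈ (VS hn G v : Finset (Fin q → Fin n)) ↔
      ∀ u : Fin N, u < v → G.Adj u v → ¬ (z ≤ Fgr hn G u) := by
  rw [VS, Finset.mem_filter]
  simp

lemma Fgr_valid {v : Fin N} (h : (VS hn G v : Finset (Fin q → Fin n)).Nonempty) :
    ∀ u : Fin N, u < v → G.Adj u v → ¬ ((Fgr hn G v : Fin q → Fin n) ≤ Fgr hn G u) := by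
  have := pick_mem hn h
  rw [← Fgr_eq] at this
  exact (VS_mem_iff hn G).mp this

lemma Fgr_min {v : Fin N} (h : (VS hn G v : Finset (Fin q → Fin n)).Nonempty)
    {y : Fin q → Fin n}
    (hy : ∀ u : Fin N, u < v → G.Adj u v → ¬ (y ≤ Fgr hn G u)) :
    key (Fgr hn G v : Fin q → Fin n) ≤ key y := by
  rw [Fgr_eq]
  exact pick_min hn h y ((VS_mem_iff hn G).mpr hy)

/-- contrapositive of minimality -/
lemma Fgr_min' {v : Fin N} (h : (VS hn G v : Finset (Fin q → Fin n)).Nonempty)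
    {y : Fin q → Fin n} (hy : key y < key (Fgr hn G v : Fin q → Fin n)) :
    ∃ u : Fin N, u < v ∧ G.Adj u v ∧ y ≤ Fgr hn G u := by
  by_contra hcon
  push_neg at hcon
  have := Fgr_min hn G h (y := y) hcon
  omega

end Greedy

namespace BranchA

open scoped Classical
open Stmt12Core Greedy

variable {n q N : ℕ}

noncomputable def col (hn : 0 < n) (hq : 0 < q) (G : SimpleGraph (Fin N))
    (u v : Fin N) : Fin q :=
  if h : ∃ c, (Fgr hn G u : Fin q → Fin n) c < (Fgr hn G v : Fin q → Fin n) c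
    then h.choose else ⟨0, hq⟩

lemma col_spec (hn : 0 < n) (hq : 0 < q) (G : SimpleGraph (Fin N))
    (hne : ∀ v : Fin N, (VS hn G v : Finset (Fin q → Fin n)).Nonempty)
    {u v : Fin N} (huv : u < v) (hadj : G.Adj u v) {c : Fin q}
    (hc : col hn hq G u v = c) :
    (Fgr hn G u : Fin q → Fin n) c < (Fgr hn G v : Fin q → Fin n) c := by
  have hval := Fgr_valid hn G (hne v) u huv hadj
  have hex : ∃ c, (Fgr hn G u : Fin q → Fin n) c < (Fgr hn G v : Fin q → Fin n) c := by
    by_contra hcon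
    push_neg at hcon
    exact hval (fun c => hcon c)
  rw [col, dif_pos hex] at hc
  rw [← hc]
  exact hex.choose_spec

lemma branchA (hn : 0 < n) (hq : 0 < q) (G : SimpleGraph (Fin N))
    (hne : ∀ v : Fin N, (VS hn G v : Finset (Fin q → Fin n)).Nonempty) :
    ∀ c : Fin q, ¬ ∃ w : Fin (n+1) → Fin N,
      (StrictMono w ∧ (∀ i : Fin n, G.Adj (w i.castSucc) (w i.succ))) ∧
      (∀ i : Fin n, col hn hq G (w i.castSucc) (w i.succ) = c) := by
  intro c ⟨w, ⟨hmono, hadj⟩, hcol⟩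
  have grow : ∀ i : ℕ, ∀ hi : i < n + 1,
      (i : ℕ) ≤ ((Fgr hn G (w ⟨i, hi⟩) : Fin q → Fin n) c : ℕ) := by
    intro i
    induction i with
    | zero => intro hi; exact Nat.zero_le _
    | succ j ih =>
      intro hi
      have hj : j < n := by omega
      have hjn : j < n + 1 := by omega
      have hcast : (⟨j, hj⟩ : Fin n).castSucc = (⟨j, hjn⟩ : Fin (n+1)) := rfl
      have hsucc : (⟨j, hj⟩ : Fin n).succ = (⟨j+1, hi⟩ : Fin (n+1)) := rfl
      have hlt := col_spec hn hq G hne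
        (hmono (show (⟨j, hj⟩ : Fin n).castSucc < (⟨j, hj⟩ : Fin n).succ from
          Fin.castSucc_lt_succ))
        (hadj ⟨j, hj⟩) (hcol ⟨j, hj⟩)
      rw [hcast, hsucc] at hlt
      have := ih hjn
      omega
  have hfin := grow n (by omega)
  have : ((Fgr hn G (w ⟨n, by omega⟩) : Fin q → Fin n) c : ℕ) < n :=
    (Fgr hn G (w ⟨n, by omega⟩) c).2
  omega

end BranchA

namespace BranchB

open scoped Classical
open Stmt12Core Greedy

variable {n q N : ℕ}

section Attain

variable (hn : 0 < n) (G : SimpleGraph (Fin N)) (v₀ : Fin N)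
variable (hstuck : ¬ (VS hn G v₀ : Finset (Fin q → Fin n)).Nonempty)
variable (hprev : ∀ u : Fin N, u < v₀ → (VS hn G u : Finset (Fin q → Fin n)).Nonempty)

/-- the top vector -/
noncomputable def top : Fin q → Fin n := fun _ => ⟨n - 1, by omega⟩

lemma le_top (z : Fin q → Fin n) : z ≤ top hn := by
  intro c
  have h2 := (z c).2
  rw [Fin.le_def]
  show (z c : ℕ) ≤ n - 1
  omega

include hstuck in
lemma top_attained : ∃ u : Fin N, u < v₀ ∧ (Fgr hn G u : Fin q → Fin n) = top hn := by
  have : (top hn : Fin q → Fin n) ∉ (VS hn G v₀ : Finset (Fin q → Fin n)) := by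
    intro hmem
    exact hstuck ⟨_, hmem⟩
  rw [VS_mem_iff] at this
  push_neg at this
  obtain ⟨u, h1, _, h3⟩ := this
  exact ⟨u, h1, le_antisymm (le_top hn _) h3⟩

include hstuck hprev in
lemma attain (z : Fin q → Fin n) :
    ∃ v : Fin N, v < v₀ ∧ (Fgr hn G v : Fin q → Fin n) = z ∧
      ∀ u : Fin N, u < v → key (Fgr hn G u : Fin q → Fin n) < key z := by
  obtain ⟨ut, hut, hFt⟩ := top_attained hn G v₀ hstuck
  have hBne : (Finset.univ.filter (fun v : Fin N => v < v₀ ∧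
      key z ≤ key (Fgr hn G v : Fin q → Fin n))).Nonempty := by
    refine ⟨ut, ?_⟩
    simp only [Finset.mem_filter, Finset.mem_univ, true_and]
    exact ⟨hut, by rw [hFt]; exact key_le_of_le (le_top hn z)⟩
  set B := Finset.univ.filter (fun v : Fin N => v < v₀ ∧
      key z ≤ key (Fgr hn G v : Fin q → Fin n)) with hB
  set vz := B.min' hBne with hvz
  have hvzB : vz ∈ B := Finset.min'_mem _ _
  rw [hB, Finset.mem_filter] at hvzB
  obtain ⟨-, hvz0, hvzk⟩ := hvzB
  have hsmaller : ∀ u : Fin N, u < vz → key (Fgr hn G u : Fin q → Fin n) < key z := by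
    intro u hu
    by_contra hcon
    push_neg at hcon
    have huB : u ∈ B := by
      rw [hB, Finset.mem_filter]
      exact ⟨Finset.mem_univ _, lt_trans hu hvz0, hcon⟩
    have hle := Finset.min'_le B u huB
    rw [← hvz] at hle
    exact absurd hu (not_lt.mpr hle)
  refine ⟨vz, hvz0, ?_, hsmaller⟩
  by_contra hne
  have hklt : key z < key (Fgr hn G vz : Fin q → Fin n) :=
    lt_of_le_of_ne hvzk (fun h => hne (key_inj h).symm)
  have hYne : (Finset.univ.filter (fun y : Fin q → Fin n =>
      key y < key (Fgr hn G vz : Fin q → Fin n))).Nonempty :=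
    ⟨z, by simp [hklt]⟩
  obtain ⟨ys, hysmem, hysmax⟩ := Finset.exists_max_image _ key hYne
  rw [Finset.mem_filter] at hysmem
  obtain ⟨u, hu1, hu2, hu3⟩ := Fgr_min' hn G (hprev vz hvz0) hysmem.2
  have h1 : key (Fgr hn G u : Fin q → Fin n) < key z := hsmaller u hu1
  have h2 : key z ≤ key ys := hysmax z (by simp [hklt])
  have h3 : key ys ≤ key (Fgr hn G u : Fin q → Fin n) := key_le_of_le hu3
  omega

end Attain

section Count

variable (hn : 0 < n) (G : SimpleGraph (Fin N))

noncomputable def PF : Finset (Fin N × Fin N) :=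
  Finset.univ.filter (fun p => p.1 < p.2 ∧ G.Adj p.1 p.2)

noncomputable def Maxz (z : Fin q → Fin n) : Finset (Fin q → Fin n) :=
  Finset.univ.filter (fun y => key y < key z ∧
    ∀ x : Fin q → Fin n, key x < key z → y ≤ x → x = y)

lemma jset_subset_maxz (z : Fin q → Fin n) :
    (Finset.univ.filter (fun y : Fin q → Fin n => wt y = wt z ∧ key y < key z)) ⊆
      Maxz z := by
  intro y hy
  rw [Finset.mem_filter] at hy
  obtain ⟨-, hwt, hkey⟩ := hy
  rw [Maxz, Finset.mem_filter]
  refine ⟨Finset.mem_univ _, hkey, ?_⟩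
  intro x hx hyx
  by_contra hne
  have h1 : wt y < wt x := wt_lt_of_lt hyx (fun h => hne h.symm)
  have h2 : key z < key x := key_lt_of_wt_lt (by omega)
  omega

lemma maxz_nonempty (z : Fin q → Fin n) (h : ∃ y : Fin q → Fin n, key y < key z) :
    (Maxz z : Finset (Fin q → Fin n)).Nonempty := by
  obtain ⟨y0, hy0⟩ := h
  have hYne : (Finset.univ.filter (fun y : Fin q → Fin n => key y < key z)).Nonempty :=
    ⟨y0, by simp [hy0]⟩
  obtain ⟨ys, hysmem, hysmax⟩ := Finset.exists_max_image _ key hYne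
  rw [Finset.mem_filter] at hysmem
  refine ⟨ys, ?_⟩
  rw [Maxz, Finset.mem_filter]
  refine ⟨Finset.mem_univ _, hysmem.2, ?_⟩
  intro x hx hyx
  by_contra hne
  have h1 : key ys < key x := key_lt_of_lt hyx (fun h => hne h.symm)
  have h2 : key x ≤ key ys := hysmax x (by simp [hx])
  omega

variable (v₀ : Fin N)
variable (hstuck : ¬ (VS hn G v₀ : Finset (Fin q → Fin n)).Nonempty)
variable (hprev : ∀ u : Fin N, u < v₀ → (VS hn G u : Finset (Fin q → Fin n)).Nonempty)

include hstuck hprev in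
lemma sum_maxz_le :
    ∑ z : (Fin q → Fin n), (Maxz z : Finset (Fin q → Fin n)).card ≤ (PF G).card := by
  choose vf hvf1 hvf2 hvf3 using (fun z => attain hn G v₀ hstuck hprev z)
  have hinj : Function.Injective vf := by
    intro z z' h
    rw [← hvf2 z, ← hvf2 z', h]
  have hcard : ∀ z : Fin q → Fin n, (Maxz z : Finset (Fin q → Fin n)).card ≤
      ((PF G).filter (fun p => p.2 = vf z)).card := by
    intro z
    classical
    set g : (Fin q → Fin n) → Fin N × Fin N := fun y =>
      if h : ∃ u : Fin N, u < vf z ∧ G.Adj u (vf z) ∧ y ≤ Fgr hn G u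
        then (h.choose, vf z) else (vf z, vf z) with hg
    apply Finset.card_le_card_of_injOn g
    · intro y hy
      rw [Finset.mem_coe, Maxz, Finset.mem_filter] at hy
      have hkey : key y < key (Fgr hn G (vf z) : Fin q → Fin n) := by
        rw [hvf2 z]; exact hy.2.1
      have hex := Fgr_min' hn G (hprev (vf z) (hvf1 z)) hkey
      rw [hg]
      simp only [dif_pos hex]
      have hspec := hex.choose_spec
      rw [Finset.mem_coe, Finset.mem_filter, PF, Finset.mem_filter]
      exact ⟨⟨Finset.mem_univ _, hspec.1, hspec.2.1⟩, rfl⟩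
    · intro y hy y' hy' hgy
      simp only [Finset.mem_coe, Maxz, Finset.mem_filter] at hy hy'
      have hkey : key y < key (Fgr hn G (vf z) : Fin q → Fin n) := by
        rw [hvf2 z]; exact hy.2.1
      have hkey' : key y' < key (Fgr hn G (vf z) : Fin q → Fin n) := by
        rw [hvf2 z]; exact hy'.2.1
      have hex := Fgr_min' hn G (hprev (vf z) (hvf1 z)) hkey
      have hex' := Fgr_min' hn G (hprev (vf z) (hvf1 z)) hkey'
      rw [hg] at hgy
      simp only [dif_pos hex, dif_pos hex'] at hgy
      have hu : hex.choose = hex'.choose := by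
        have := congrArg Prod.fst hgy
        simpa using this
      have hspec := hex.choose_spec
      have hspec' := hex'.choose_spec
      set u := hex.choose with hudef
      have hkk : key (Fgr hn G u : Fin q → Fin n) < key z := hvf3 z u hspec.1
      have e1 : (Fgr hn G u : Fin q → Fin n) = y := hy.2.2 _ hkk hspec.2.2
      have e2 : (Fgr hn G u : Fin q → Fin n) = y' := by
        rw [hu] at hspec ⊢
        exact hy'.2.2 _ (by rw [← hu]; exact hkk) hspec'.2.2
      rw [← e1, ← e2]
  calc ∑ z : (Fin q → Fin n), (Maxz z : Finset (Fin q → Fin n)).card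
      ≤ ∑ z : (Fin q → Fin n), ((PF G).filter (fun p => p.2 = vf z)).card :=
        Finset.sum_le_sum (fun z _ => hcard z)
    _ = ∑ v ∈ Finset.univ.image vf, ((PF G).filter (fun p => p.2 = v)).card := by
        rw [Finset.sum_image (fun x _ y _ h => hinj h)]
    _ ≤ ∑ v : Fin N, ((PF G).filter (fun p => p.2 = v)).card :=
        Finset.sum_le_sum_of_subset (Finset.subset_univ _)
    _ = (PF G).card := by
        rw [← Finset.card_eq_sum_card_fiberwise (f := Prod.snd) (t := Finset.univ)
          (fun p _ => Finset.mem_univ _)]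

end Count

end BranchB

namespace VecCount

open scoped Classical
open Stmt12Core

variable {n q : ℕ}

noncomputable def Tpairs : Finset ((Fin q → Fin n) × (Fin q → Fin n)) :=
  Finset.univ.filter (fun p => wt p.1 = wt p.2 ∧ key p.1 < key p.2)

noncomputable def Tsame : Finset ((Fin q → Fin n) × (Fin q → Fin n)) :=
  Finset.univ.filter (fun p => wt p.1 = wt p.2)

lemma sum_jset_eq :
    ∑ z : (Fin q → Fin n),
      (Finset.univ.filter (fun y : Fin q → Fin n => wt y = wt z ∧ key y < key z)).card
      = (Tpairs : Finset ((Fin q → Fin n) × (Fin q → Fin n))).card := by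
  rw [Finset.card_eq_sum_card_fiberwise (f := Prod.snd) (t := Finset.univ)
    (fun p _ => Finset.mem_univ _)]
  apply Finset.sum_congr rfl
  intro z _
  apply Finset.card_bij' (fun y _ => (y, z)) (fun p _ => p.1)
  · intro y hy
    rw [Finset.mem_filter] at hy
    rw [Finset.mem_filter, Tpairs, Finset.mem_filter]
    exact ⟨⟨Finset.mem_univ _, hy.2⟩, rfl⟩
  · intro p hp
    rw [Finset.mem_filter, Tpairs, Finset.mem_filter] at hp
    rw [Finset.mem_filter]
    obtain ⟨⟨-, h1, h2⟩, h3⟩ := hp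
    rw [h3] at h1 h2
    exact ⟨Finset.mem_univ _, h1, h2⟩
  · intro y _
    rfl
  · intro p hp
    rw [Finset.mem_filter] at hp
    rw [← hp.2]

lemma tsame_le : (Tsame : Finset ((Fin q → Fin n) × (Fin q → Fin n))).card ≤
    Fintype.card (Fin q → Fin n) +
      2 * (Tpairs : Finset ((Fin q → Fin n) × (Fin q → Fin n))).card := by
  have hsub : (Tsame : Finset ((Fin q → Fin n) × (Fin q → Fin n))) ⊆
      (Finset.univ.image (fun z : Fin q → Fin n => (z, z))) ∪
      (Tpairs ∪ (Tpairs.image Prod.swap)) := by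
    intro p hp
    obtain ⟨a, b⟩ := p
    rw [Tsame, Finset.mem_filter] at hp
    simp only at hp
    rcases lt_trichotomy (key a) (key b) with h | h | h
    · apply Finset.mem_union_right
      apply Finset.mem_union_left
      rw [Tpairs, Finset.mem_filter]
      exact ⟨Finset.mem_univ _, hp.2, h⟩
    · have hab : a = b := key_inj h
      apply Finset.mem_union_left
      rw [Finset.mem_image]
      exact ⟨a, Finset.mem_univ _, by rw [hab]⟩
    · apply Finset.mem_union_right
      apply Finset.mem_union_right
      rw [Finset.mem_image]
      refine ⟨(b, a), ?_, rfl⟩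
      rw [Tpairs, Finset.mem_filter]
      exact ⟨Finset.mem_univ _, hp.2.symm, h⟩
  calc (Tsame : Finset ((Fin q → Fin n) × (Fin q → Fin n))).card
      ≤ _ := Finset.card_le_card hsub
    _ ≤ (Finset.univ.image (fun z : Fin q → Fin n => (z, z))).card +
        (Tpairs ∪ (Tpairs.image Prod.swap)).card := Finset.card_union_le _ _
    _ ≤ (Finset.univ.image (fun z : Fin q → Fin n => (z, z))).card +
        ((Tpairs : Finset _).card + (Tpairs.image Prod.swap).card) := by
        have := Finset.card_union_le (Tpairs (n := n) (q := q)) (Tpairs.image Prod.swap)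
        omega
    _ ≤ Fintype.card (Fin q → Fin n) + 2 * (Tpairs : Finset _).card := by
        have h1 := Finset.card_image_le (s := (Finset.univ : Finset (Fin q → Fin n)))
          (f := fun z => (z, z))
        have h2 := Finset.card_image_le (s := (Tpairs : Finset ((Fin q → Fin n) × (Fin q → Fin n))))
          (f := Prod.swap)
        rw [Finset.card_univ] at h1
        omega

lemma wt_le (z : Fin q → Fin n) : wt z ≤ q * (n - 1) := by
  calc wt z = ∑ c, ((z c : ℕ)) := rfl
    _ ≤ ∑ _c : Fin q, (n - 1) := by
        apply Finset.sum_le_sum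
        intro c _
        have := (z c).2
        omega
    _ = q * (n - 1) := by
        rw [Finset.sum_const, Finset.card_univ, Fintype.card_fin, smul_eq_mul]

lemma cs_bound :
    (Fintype.card (Fin q → Fin n)) ^ 2 ≤
      (q * (n - 1) + 1) * (Tsame : Finset ((Fin q → Fin n) × (Fin q → Fin n))).card := by
  classical
  set D := q * (n - 1) + 1 with hD
  set cs : ℕ → ℕ := fun s => (Finset.univ.filter (fun z : Fin q → Fin n => wt z = s)).card
    with hcs
  have hsum1 : ∑ s ∈ Finset.range D, cs s = Fintype.card (Fin q → Fin n) := by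
    rw [← Finset.card_univ,
      Finset.card_eq_sum_card_fiberwise (f := wt) (t := Finset.range D)
      (fun z _ => Finset.mem_range.mpr (Nat.lt_succ_of_le (wt_le z)))]
  have hsum2 : ∑ s ∈ Finset.range D, (cs s) ^ 2 =
      (Tsame : Finset ((Fin q → Fin n) × (Fin q → Fin n))).card := by
    rw [Finset.card_eq_sum_card_fiberwise (f := fun p => wt p.1) (t := Finset.range D)
      (fun p _ => Finset.mem_range.mpr (Nat.lt_succ_of_le (wt_le p.1)))]
    apply Finset.sum_congr rfl
    intro s _
    have hset : (Tsame : Finset ((Fin q → Fin n) × (Fin q → Fin n))).filter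
        (fun p => wt p.1 = s) =
        (Finset.univ.filter (fun z : Fin q → Fin n => wt z = s)) ×ˢ
        (Finset.univ.filter (fun z : Fin q → Fin n => wt z = s)) := by
      ext p
      rw [Finset.mem_filter, Tsame, Finset.mem_filter, Finset.mem_product,
        Finset.mem_filter, Finset.mem_filter]
      constructor
      · rintro ⟨⟨-, h1⟩, h2⟩
        exact ⟨⟨Finset.mem_univ _, h2⟩, ⟨Finset.mem_univ _, by omega⟩⟩
      · rintro ⟨⟨-, h1⟩, ⟨-, h2⟩⟩
        exact ⟨⟨Finset.mem_univ _, by omega⟩, h1⟩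
    rw [hset, Finset.card_product]
    ring
  have hCS : (∑ s ∈ Finset.range D, (cs s : ℤ)) ^ 2 ≤
      (Finset.range D).card * ∑ s ∈ Finset.range D, (cs s : ℤ) ^ 2 :=
    sq_sum_le_card_mul_sum_sq
  rw [Finset.card_range] at hCS
  have : ((Fintype.card (Fin q → Fin n) : ℤ)) ^ 2 ≤
      (D : ℤ) * ((Tsame : Finset ((Fin q → Fin n) × (Fin q → Fin n))).card : ℤ) := by
    calc ((Fintype.card (Fin q → Fin n) : ℤ)) ^ 2
        = (∑ s ∈ Finset.range D, (cs s : ℤ)) ^ 2 := by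
          rw [← hsum1]; push_cast; ring
      _ ≤ (D : ℤ) * ∑ s ∈ Finset.range D, (cs s : ℤ) ^ 2 := hCS
      _ = (D : ℤ) * ((Tsame : Finset ((Fin q → Fin n) × (Fin q → Fin n))).card : ℤ) := by
          rw [← hsum2]; push_cast; ring
  exact_mod_cast this

end VecCount

namespace Assembly

open scoped Classical
open Stmt12Core Greedy BranchB VecCount

variable {n q N : ℕ}

lemma sum_maxz_ge_T (hn : 0 < n) :
    (Tpairs : Finset ((Fin q → Fin n) × (Fin q → Fin n))).card ≤
      ∑ z : (Fin q → Fin n), (Maxz z : Finset (Fin q → Fin n)).card := by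
  rw [← sum_jset_eq]
  apply Finset.sum_le_sum
  intro z _
  exact Finset.card_le_card (jset_subset_maxz z)

lemma sum_maxz_ge_P (hn : 0 < n) :
    Fintype.card (Fin q → Fin n) ≤
      (∑ z : (Fin q → Fin n), (Maxz z : Finset (Fin q → Fin n)).card) + 1 := by
  have hinh : Nonempty (Fin q → Fin n) := ⟨fun _ => ⟨0, hn⟩⟩
  have huniv : (Finset.univ : Finset (Fin q → Fin n)).Nonempty :=
    Finset.univ_nonempty
  obtain ⟨zmin, -, hzmin⟩ := Finset.exists_min_image Finset.univ key huniv
  have hone : ∀ z ∈ Finset.univ.erase zmin,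
      1 ≤ (Maxz z : Finset (Fin q → Fin n)).card := by
    intro z hz
    rw [Finset.mem_erase] at hz
    have hlt : key zmin < key (z : Fin q → Fin n) := by
      have hle := hzmin z (Finset.mem_univ _)
      have hne : key zmin ≠ key z := fun h => hz.1 (key_inj h).symm
      omega
    exact Finset.card_pos.mpr (maxz_nonempty z ⟨zmin, hlt⟩)
  calc Fintype.card (Fin q → Fin n)
      = (Finset.univ : Finset (Fin q → Fin n)).card := (Finset.card_univ).symm
    _ = (Finset.univ.erase zmin).card + 1 := by
        rw [Finset.card_erase_of_mem (Finset.mem_univ _)]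
        have : 1 ≤ (Finset.univ : Finset (Fin q → Fin n)).card :=
          Finset.card_pos.mpr huniv
        omega
    _ ≤ (∑ z ∈ Finset.univ.erase zmin, (Maxz z : Finset (Fin q → Fin n)).card) + 1 := by
        have := Finset.card_nsmul_le_sum (Finset.univ.erase zmin)
          (fun z => (Maxz z : Finset (Fin q → Fin n)).card) 1 hone
        simpa using this
    _ ≤ (∑ z : (Fin q → Fin n), (Maxz z : Finset (Fin q → Fin n)).card) + 1 := by
        have h := Finset.sum_le_sum_of_subset
          (f := fun z => (Maxz z : Finset (Fin q → Fin n)).card)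
          (Finset.erase_subset zmin Finset.univ)
        exact Nat.add_le_add_right h 1

lemma ncard_eq_PF (G : SimpleGraph (Fin N)) :
    G.edgeSet.ncard = (PF G : Finset (Fin N × Fin N)).card := by
  have himg : G.edgeSet = (fun p : Fin N × Fin N => s(p.1, p.2)) '' ↑(PF G) := by
    apply Set.eq_of_subset_of_subset
    · intro e he
      induction e with
      | _ a b =>
        rw [SimpleGraph.mem_edgeSet] at he
        have hne : a ≠ b := G.ne_of_adj he
        rcases lt_or_gt_of_ne hne with h | h
        · refine ⟨(a, b), ?_, rfl⟩
          rw [Finset.mem_coe, PF, Finset.mem_filter]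
          exact ⟨Finset.mem_univ _, h, he⟩
        · refine ⟨(b, a), ?_, Sym2.eq_swap⟩
          rw [Finset.mem_coe, PF, Finset.mem_filter]
          exact ⟨Finset.mem_univ _, h, he.symm⟩
    · rintro e ⟨p, hp, rfl⟩
      rw [Finset.mem_coe, PF, Finset.mem_filter] at hp
      rw [SimpleGraph.mem_edgeSet]
      exact hp.2.2
  have hinj : Set.InjOn (fun p : Fin N × Fin N => s(p.1, p.2)) ↑(PF G) := by
    intro p hp p' hp' heq
    rw [Finset.mem_coe, PF, Finset.mem_filter] at hp hp'
    obtain ⟨a, b⟩ := p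
    obtain ⟨c, d⟩ := p'
    simp only [Sym2.eq_iff, Sym2.eq, Sym2.rel_iff', Prod.mk.injEq, Prod.swap_prod_mk] at heq
    rcases heq with ⟨rfl, rfl⟩ | ⟨rfl, rfl⟩
    · rfl
    · exfalso
      have h1 := hp.2.1
      have h2 := hp'.2.1
      simp only at h1 h2
      exact absurd (lt_trans h1 h2) (lt_irrefl _)
  rw [himg, Set.ncard_image_of_injOn hinj, Set.ncard_coe_finset]

lemma X_ge : ∀ qq : ℕ, 2 ≤ qq → 2 * qq ^ 2 ≤ 2 ^ (2 * qq - 1) * Nat.factorial (qq - 1) := by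
  intro qq hqq
  induction qq with
  | zero => omega
  | succ k ih =>
    rcases Nat.lt_or_ge k 2 with hk | hk
    · interval_cases k
      · omega
      · norm_num [Nat.factorial]
    · have hih := ih (by omega)
      have h1 : 2 * (k + 1) - 1 = (2 * k - 1) + 2 := by omega
      have h2 : k + 1 - 1 = k := by omega
      have h3 : k - 1 + 1 = k := by omega
      rw [h1, h2, pow_add]
      have h4 : Nat.factorial k = k * Nat.factorial (k - 1) := by
        conv_lhs => rw [← h3]
        rw [Nat.factorial_succ, h3]
      rw [h4]
      have hchain : 2 * (k + 1) ^ 2 ≤ (2 * k ^ 2) * (4 * k) := by nlinarith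
      calc 2 * (k + 1) ^ 2 ≤ (2 * k ^ 2) * (4 * k) := hchain
        _ ≤ (2 ^ (2 * k - 1) * Nat.factorial (k - 1)) * (4 * k) :=
            Nat.mul_le_mul_right _ hih
        _ = 2 ^ (2 * k - 1) * 2 ^ 2 * (k * Nat.factorial (k - 1)) := by ring
end Assembly

namespace Assembly

open scoped Classical
open Stmt12Core Greedy BranchA BranchB VecCount

variable {n q N : ℕ}

lemma arith_contra (nn qq m : ℕ) (hn2 : 2 ≤ nn) (hq2 : 2 ≤ qq)
    (h1 : (nn ^ qq) ^ 2 ≤ (qq * (nn - 1) + 1) * (nn ^ qq + 2 * m))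
    (h2 : nn ^ qq ≤ m + 1)
    (h3 : m * (2 ^ (2 * qq - 1) * Nat.factorial (qq - 1)) ≤ nn ^ (2 * qq - 1)) :
    False := by
  set X := 2 ^ (2 * qq - 1) * Nat.factorial (qq - 1) with hXdef
  have hX : 2 * qq ^ 2 ≤ X := X_ge qq hq2
  have hP4 : 4 ≤ nn ^ qq := by
    calc (4 : ℕ) = 2 ^ 2 := by norm_num
      _ ≤ nn ^ 2 := Nat.pow_le_pow_left hn2 2
      _ ≤ nn ^ qq := Nat.pow_le_pow_right (by omega) hq2
  have hD : qq * (nn - 1) + 1 ≤ qq * nn := by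
    have he : qq * (nn - 1) + qq = qq * nn := by
      rw [← Nat.mul_succ]
      congr 1
      omega
    omega
  have hpow : nn * nn ^ (2 * qq - 1) = (nn ^ qq) ^ 2 := by
    rw [← pow_succ']
    have he : 2 * qq - 1 + 1 = qq * 2 := by omega
    rw [he, pow_mul]
  have step1 : nn * (m * X) ≤ (nn ^ qq) ^ 2 := by
    calc nn * (m * X) ≤ nn * nn ^ (2 * qq - 1) := mul_le_mul_right h3 nn
      _ = (nn ^ qq) ^ 2 := hpow
  have step2 : (nn ^ qq) ^ 2 ≤ (qq * nn) * (nn ^ qq + 2 * m) :=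
    le_trans h1 (mul_le_mul_left hD _)
  have step3 : m * X ≤ qq * (nn ^ qq + 2 * m) := by
    apply Nat.le_of_mul_le_mul_left _ (show 0 < nn by omega)
    calc nn * (m * X) ≤ (qq * nn) * (nn ^ qq + 2 * m) := le_trans step1 step2
      _ = nn * (qq * (nn ^ qq + 2 * m)) := by ring
  have step4 : m * X ≤ qq * (3 * m + 1) := by
    refine le_trans step3 (mul_le_mul_right (by omega) qq)
  have step5 : m * (2 * qq ^ 2) ≤ qq * (3 * m + 1) :=
    le_trans (mul_le_mul_right hX m) step4
  have step6 : 2 * m * qq ≤ 3 * m + 1 := by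
    apply Nat.le_of_mul_le_mul_left _ (show 0 < qq by omega)
    calc qq * (2 * m * qq) = m * (2 * qq ^ 2) := by ring
      _ ≤ qq * (3 * m + 1) := step5
  have step7 : 2 * m * 2 ≤ 2 * m * qq := mul_le_mul_right hq2 _
  omega

lemma core_main (hn2 : 2 ≤ n) (hq2 : 2 ≤ q) (G : SimpleGraph (Fin N))
    (hm : G.edgeSet.ncard * (2 ^ (2 * q - 1) * Nat.factorial (q - 1)) ≤ n ^ (2 * q - 1)) :
    ∃ col : Fin N → Fin N → Fin q, ∀ c : Fin q,
      ¬ ∃ w : Fin (n + 1) → Fin N,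
        (StrictMono w ∧ (∀ i : Fin n, G.Adj (w i.castSucc) (w i.succ))) ∧
        (∀ i : Fin n, col (w i.castSucc) (w i.succ) = c) := by
  have hn1 : 0 < n := by omega
  have hq1 : 0 < q := by omega
  by_cases hall : ∀ v : Fin N, (VS hn1 G v : Finset (Fin q → Fin n)).Nonempty
  · exact ⟨col hn1 hq1 G, branchA hn1 hq1 G hall⟩
  · exfalso
    push_neg at hall
    have hSne : (Finset.univ.filter (fun v : Fin N =>
        ¬ (VS hn1 G v : Finset (Fin q → Fin n)).Nonempty)).Nonempty := by
      obtain ⟨v, hv⟩ := hall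
      exact ⟨v, Finset.mem_filter.mpr ⟨Finset.mem_univ _, Finset.not_nonempty_iff_eq_empty.mpr hv⟩⟩
    set S := Finset.univ.filter (fun v : Fin N =>
        ¬ (VS hn1 G v : Finset (Fin q → Fin n)).Nonempty) with hSdef
    set v₀ := S.min' hSne with hv₀
    have hstuck : ¬ (VS hn1 G v₀ : Finset (Fin q → Fin n)).Nonempty := by
      have h := Finset.min'_mem S hSne
      rw [← hv₀] at h
      simp only [hSdef, Finset.mem_filter] at h
      exact h.2
    have hprev : ∀ u : Fin N, u < v₀ → (VS hn1 G u : Finset (Fin q → Fin n)).Nonempty := by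
      intro u hu
      by_contra hcon
      have huS : u ∈ S := by
        simp only [hSdef, Finset.mem_filter]
        exact ⟨Finset.mem_univ _, hcon⟩
      have := Finset.min'_le S u huS
      rw [← hv₀] at this
      exact absurd hu (not_lt.mpr this)
    -- counting
    have hT : (Tpairs : Finset ((Fin q → Fin n) × (Fin q → Fin n))).card ≤
        (PF G : Finset (Fin N × Fin N)).card :=
      le_trans (sum_maxz_ge_T hn1) (sum_maxz_le hn1 G v₀ hstuck hprev)
    have hP : Fintype.card (Fin q → Fin n) ≤ (PF G : Finset (Fin N × Fin N)).card + 1 :=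
      le_trans (sum_maxz_ge_P hn1)
        (by have := sum_maxz_le hn1 G v₀ hstuck hprev; omega)
    have hCS := cs_bound (n := n) (q := q)
    have hTs := tsame_le (n := n) (q := q)
    have hcard : Fintype.card (Fin q → Fin n) = n ^ q := by
      simp [Fintype.card_fun]
    have hm' : (PF G : Finset (Fin N × Fin N)).card *
        (2 ^ (2 * q - 1) * Nat.factorial (q - 1)) ≤ n ^ (2 * q - 1) := by
      rw [← ncard_eq_PF]
      exact hm
    apply arith_contra n q (PF G : Finset (Fin N × Fin N)).card hn2 hq2 _ _ hm'
    · rw [← hcard]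
      calc (Fintype.card (Fin q → Fin n)) ^ 2
          ≤ (q * (n - 1) + 1) *
            (Tsame : Finset ((Fin q → Fin n) × (Fin q → Fin n))).card := hCS
        _ ≤ (q * (n - 1) + 1) * (Fintype.card (Fin q → Fin n) +
            2 * (Tpairs : Finset ((Fin q → Fin n) × (Fin q → Fin n))).card) :=
            mul_le_mul_right hTs _
        _ ≤ (q * (n - 1) + 1) * (Fintype.card (Fin q → Fin n) +
            2 * (PF G : Finset (Fin N × Fin N)).card) :=
            mul_le_mul_right (by omega) _
    · rw [← hcard]
      exact hP

end Assembly

namespace Stmt12Aux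

open scoped Classical

/-- Longest length of a monochromatic (color `c`) monotone path ending at `v`. -/
noncomputable def ml {N q : ℕ} (G : SimpleGraph (Fin N)) (col : Fin N → Fin N → Fin q)
    (c : Fin q) (v : Fin N) : ℕ :=
  (Finset.univ.filter (fun u : Fin N => u < v ∧ G.Adj u v ∧ col u v = c)).attach.sup
    (fun u => ml G col c u.1 + 1)
termination_by v.val
decreasing_by
  have := u.2
  simp only [Finset.mem_filter] at this
  exact this.2.1

lemma ml_eq {N q : ℕ} (G : SimpleGraph (Fin N)) (col : Fin N → Fin N → Fin q)
    (c : Fin q) (v : Fin N) :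
    ml G col c v = (Finset.univ.filter
      (fun u : Fin N => u < v ∧ G.Adj u v ∧ col u v = c)).attach.sup
      (fun u => ml G col c u.1 + 1) := by
  conv_lhs => rw [ml]

lemma ml_lt {N q : ℕ} (G : SimpleGraph (Fin N)) (col : Fin N → Fin N → Fin q)
    (c : Fin q) {u v : Fin N} (huv : u < v) (hadj : G.Adj u v) (hcol : col u v = c) :
    ml G col c u < ml G col c v := by
  have hmem : u ∈ Finset.univ.filter (fun u : Fin N => u < v ∧ G.Adj u v ∧ col u v = c) := by
    simp [huv, hadj, hcol]
  have h := Finset.le_sup (f := fun w : {x // x ∈ Finset.univ.filter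
      (fun u : Fin N => u < v ∧ G.Adj u v ∧ col u v = c)} => ml G col c w.1 + 1)
    (Finset.mem_attach _ ⟨u, hmem⟩)
  rw [ml_eq G col c v]
  exact Nat.lt_of_succ_le h

/-- Append a vertex to a monotone monochromatic path. -/
lemma snoc_path {N q k : ℕ} (G : SimpleGraph (Fin N)) (col : Fin N → Fin N → Fin q)
    (c : Fin q) (w : Fin (k + 1) → Fin N) (v : Fin N)
    (hmono : StrictMono w) (hadjw : ∀ i : Fin k, G.Adj (w i.castSucc) (w i.succ))
    (hc : ∀ i : Fin k, col (w i.castSucc) (w i.succ) = c)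
    (hlast : w (Fin.last k) < v) (hadj : G.Adj (w (Fin.last k)) v)
    (hcolv : col (w (Fin.last k)) v = c) :
    StrictMono (Fin.snoc w v : Fin (k+2) → Fin N) ∧
      (∀ i : Fin (k + 1), G.Adj ((Fin.snoc w v : Fin (k+2) → Fin N) i.castSucc)
        ((Fin.snoc w v : Fin (k+2) → Fin N) i.succ)) ∧
      (∀ i : Fin (k + 1), col ((Fin.snoc w v : Fin (k+2) → Fin N) i.castSucc)
        ((Fin.snoc w v : Fin (k+2) → Fin N) i.succ) = c) := by
  have hsm : StrictMono (Fin.snoc w v : Fin (k+2) → Fin N) := by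
    intro i j hij
    rcases Fin.eq_castSucc_or_eq_last j with ⟨j', rfl⟩ | rfl
    · rcases Fin.eq_castSucc_or_eq_last i with ⟨i', rfl⟩ | rfl
      · rw [Fin.snoc_castSucc, Fin.snoc_castSucc]
        exact hmono (by exact_mod_cast hij)
      · exact absurd hij (by
          simp only [Fin.lt_iff_val_lt_val, Fin.coe_castSucc, Fin.val_last, not_lt]
          omega)
    · rw [Fin.snoc_last]
      rcases Fin.eq_castSucc_or_eq_last i with ⟨i', rfl⟩ | rfl
      · rw [Fin.snoc_castSucc]
        exact lt_of_le_of_lt (hmono.monotone (Fin.le_last i')) hlast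
      · exact absurd hij (lt_irrefl _)
  refine ⟨hsm, ?_, ?_⟩
  · intro i
    rcases Fin.eq_castSucc_or_eq_last i with ⟨i', rfl⟩ | rfl
    · rw [Fin.succ_castSucc, Fin.snoc_castSucc, Fin.snoc_castSucc]
      exact hadjw i'
    · rw [Fin.succ_last, Fin.snoc_last, Fin.snoc_castSucc]
      exact hadj
  · intro i
    rcases Fin.eq_castSucc_or_eq_last i with ⟨i', rfl⟩ | rfl
    · rw [Fin.succ_castSucc, Fin.snoc_castSucc, Fin.snoc_castSucc]
      exact hc i'
    · rw [Fin.succ_last, Fin.snoc_last, Fin.snoc_castSucc]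
      exact hcolv

end Stmt12Aux

namespace Stmt12Aux2
open Stmt12Aux
open scoped Classical

lemma exists_path {N q : ℕ} (G : SimpleGraph (Fin N)) (col : Fin N → Fin N → Fin q)
    (c : Fin q) : ∀ (k : ℕ) (v : Fin N), k ≤ ml G col c v →
    ∃ w : Fin (k+1) → Fin N, StrictMono w ∧
      (∀ i : Fin k, G.Adj (w i.castSucc) (w i.succ)) ∧
      (∀ i : Fin k, col (w i.castSucc) (w i.succ) = c) ∧ w (Fin.last k) = v := by
  intro k
  induction k with
  | zero =>
    intro v _
    refine ⟨fun _ => v, ?_, ?_, ?_, rfl⟩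
    · intro a b hab
      exact absurd (Fin.lt_iff_val_lt_val.mp hab) (by omega)
    · exact fun i => absurd i.2 (by omega)
    · exact fun i => absurd i.2 (by omega)
  | succ k ih =>
    intro v hv
    obtain ⟨u, hu, hku⟩ : ∃ u, (u < v ∧ G.Adj u v ∧ col u v = c) ∧ k ≤ ml G col c u := by
      by_contra hcon
      push_neg at hcon
      have hsup : (Finset.univ.filter
          (fun u : Fin N => u < v ∧ G.Adj u v ∧ col u v = c)).attach.sup
          (fun u => ml G col c u.1 + 1) ≤ k := by
        apply Finset.sup_le
        intro x _
        have hx := x.2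
        simp only [Finset.mem_filter, Finset.mem_univ, true_and] at hx
        have := hcon x.1 hx
        omega
      rw [ml_eq] at hv
      omega
    obtain ⟨w, h1, h2, h3, h4⟩ := ih u hku
    have hs := snoc_path G col c w v h1 h2 h3 (h4 ▸ hu.1) (h4 ▸ hu.2.1) (h4 ▸ hu.2.2)
    exact ⟨Fin.snoc w v, hs.1, hs.2.1, hs.2.2, by simp⟩

lemma top_ramsey (n q : ℕ) (hq : 1 ≤ q) :
    ∀ col : Fin (n^q + 1) → Fin (n^q + 1) → Fin q,
      ∃ c : Fin q, HasPathMulti (⊤ : SimpleGraph (Fin (n^q+1))) n col c := by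
  intro col
  by_contra hcon
  push_neg at hcon
  simp only [HasPathMulti, not_exists] at hcon
  have hn0 : 0 < n := by
    by_contra h
    push_neg at h
    interval_cases n
    · -- n = 0 : a path with 0 edges always exists
      have c0 : Fin q := ⟨0, hq⟩
      exact hcon c0 (fun _ => ⟨0, Nat.succ_pos _⟩)
        ⟨⟨fun a b hab => absurd (Fin.lt_iff_val_lt_val.mp hab) (by omega),
          fun i => absurd i.2 (by omega)⟩, fun i => absurd i.2 (by omega)⟩
  have hml : ∀ (v : Fin (n^q+1)) (c : Fin q), ml ⊤ col c v < n := by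
    intro v c
    by_contra h
    push_neg at h
    obtain ⟨w, h1, h2, h3, _⟩ := exists_path (⊤ : SimpleGraph (Fin (n^q+1))) col c n v h
    exact hcon c w ⟨⟨h1, h2⟩, h3⟩
  have hinj : Function.Injective
      (fun v => fun c => (⟨ml (⊤ : SimpleGraph (Fin (n^q+1))) col c v, hml v c⟩ : Fin n)) := by
    intro u v huv
    by_contra hne
    have hne' : u ≠ v := hne
    rcases lt_or_gt_of_ne hne' with h | h
    · have hadj : (⊤ : SimpleGraph (Fin (n^q+1))).Adj u v := by
        simp [hne']
      have := ml_lt (⊤ : SimpleGraph (Fin (n^q+1))) col (col u v) h hadj rfl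
      have heq := congrFun huv (col u v)
      simp only [Fin.mk.injEq] at heq
      omega
    · have hadj : (⊤ : SimpleGraph (Fin (n^q+1))).Adj v u := by
        simp [Ne.symm hne']
      have := ml_lt (⊤ : SimpleGraph (Fin (n^q+1))) col (col v u) h hadj rfl
      have heq := congrFun huv (col v u)
      simp only [Fin.mk.injEq] at heq
      omega
  have hcard := Fintype.card_le_of_injective _ hinj
  simp only [Fintype.card_fin, Fintype.card_fun] at hcard
  omega

end Stmt12Aux2

/-- Core colorability lemma (part 1). -/
lemma core_color (n q : ℕ) (hn : 2 ≤ n) (hq : 2 ≤ q) (N : ℕ) (G : SimpleGraph (Fin N))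
    (hm : (G.edgeSet.ncard : ℝ) ≤
      (n : ℝ) ^ (2 * q - 1) / (2 ^ (2 * q - 1) * (Nat.factorial (q - 1) : ℝ))) :
    ∃ col : Fin N → Fin N → Fin q, ∀ c : Fin q, ¬ HasPathMulti G n col c := by
  have hX : (0:ℝ) < 2 ^ (2 * q - 1) * ((Nat.factorial (q - 1) : ℕ) : ℝ) := by
    have := Nat.factorial_pos (q - 1)
    positivity
  rw [le_div_iff₀ hX] at hm
  have hmnat : G.edgeSet.ncard * (2 ^ (2 * q - 1) * Nat.factorial (q - 1)) ≤
      n ^ (2 * q - 1) := by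
    exact_mod_cast hm
  obtain ⟨col, hcol⟩ := Assembly.core_main hn hq G hmnat
  exact ⟨col, fun c hc => hcol c hc⟩

theorem stmt_12 (n q : ℕ) (hn : 2 ≤ n) (hq : 2 ≤ q) :
    (∀ (N : ℕ) (G : SimpleGraph (Fin N)),
      (G.edgeSet.ncard : ℝ) ≤
        (n : ℝ) ^ (2 * q - 1) / (2 ^ (2 * q - 1) * (Nat.factorial (q - 1) : ℝ)) →
      ∃ col : Fin N → Fin N → Fin q, ∀ c : Fin q, ¬ HasPathMulti G n col c) ∧
    (n : ℝ) ^ (2 * q - 1) / (2 ^ (2 * q - 1) * (Nat.factorial (q - 1) : ℝ)) ≤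
      (orderedSizeRamseyMulti n q : ℝ) := by
  constructor
  · exact fun N G h => core_color n q hn hq N G h
  · have hS : { m | ∃ (N : ℕ) (G : SimpleGraph (Fin N)), G.edgeSet.ncard = m ∧
        ∀ col : Fin N → Fin N → Fin q, ∃ c : Fin q, HasPathMulti G n col c }.Nonempty := by
      refine ⟨(⊤ : SimpleGraph (Fin (n^q+1))).edgeSet.ncard, ⟨n^q+1, ⊤, rfl, ?_⟩⟩
      exact Stmt12Aux2.top_ramsey n q (by omega)
    have hmem := Nat.sInf_mem hS
    simp only [Set.mem_setOf_eq] at hmem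
    obtain ⟨N, G, hG, hRam⟩ := hmem
    by_contra hlt
    push_neg at hlt
    have hle : (G.edgeSet.ncard : ℝ) ≤
        (n : ℝ) ^ (2 * q - 1) / (2 ^ (2 * q - 1) * (Nat.factorial (q - 1) : ℝ)) := by
      rw [hG]
      exact le_of_lt hlt
    obtain ⟨col, hcol⟩ := core_color n q hn hq N G hle
    obtain ⟨c, hc⟩ := hRam col
    exact hcol c hc
end

section
/- Let q ≥ 1 and M ≥ 0 be integers, and let G be an ordered graph whose vertices are colored by q-tuples of nonnegative integers summing to M, in such a way that adjacent vertices receive different tuples (a proper coloring). Color each edge uv with u < v as follows: if u has tuple c and v has tuple c′, give uv the color equal to the least index i ∈ {1, …, q} with c_i < c′_i (such an index exists since c ≠ c′ and both tuples have the same sum). Then for every color i, every monotone path in G whose edges all have color i has at most M edges. -/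
/-- Vertices are properly colored by `q`-tuples of nonnegative integers summing to `M`;
each edge `uv` with `u < v` is colored by the least index `i` with
`tup u i < tup v i`. Then every monochromatic monotone path has at most `M` edges. -/
theorem stmt_16 (q M N : ℕ) (hq : 1 ≤ q)
    (G : SimpleGraph (Fin N)) (tup : Fin N → Fin q → ℕ)
    (hsum : ∀ v : Fin N, ∑ i : Fin q, tup v i = M)
    (hproper : ∀ u v : Fin N, G.Adj u v → tup u ≠ tup v)
    (ecol : Fin N → Fin N → Fin q)
    (hecol : ∀ u v : Fin N, u < v → G.Adj u v →
      tup u (ecol u v) < tup v (ecol u v) ∧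
      ∀ i : Fin q, i < ecol u v → ¬ tup u i < tup v i) :
    ∀ (c : Fin q) (ℓ : ℕ) (v : Fin (ℓ + 1) → Fin N),
      IsMonoPath G v → (∀ i : Fin ℓ, ecol (v i.castSucc) (v i.succ) = c) → ℓ ≤ M := by
  intro c ℓ v hpath hcol
  obtain ⟨hmono, hadj⟩ := hpath
  have key : ∀ k : ℕ, ∀ hk : k ≤ ℓ, k ≤ tup (v ⟨k, Nat.lt_succ_of_le hk⟩) c := by
    intro k
    induction k with
    | zero => intro _; exact Nat.zero_le _
    | succ k ih =>
      intro hk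
      have hk' : k < ℓ := hk
      have ihv := ih (Nat.le_of_lt hk')
      set i : Fin ℓ := ⟨k, hk'⟩
      have hlt : v i.castSucc < v i.succ := hmono (by simp [Fin.lt_def])
      have h := (hecol _ _ hlt (hadj i)).1
      rw [hcol i] at h
      have : tup (v i.castSucc) c < tup (v i.succ) c := h
      have hcs : i.castSucc = (⟨k, Nat.lt_succ_of_le (Nat.le_of_lt hk')⟩ : Fin (ℓ+1)) := rfl
      have hsc : i.succ = (⟨k+1, Nat.lt_succ_of_le hk⟩ : Fin (ℓ+1)) := rfl
      rw [hcs, hsc] at this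
      omega
  have h1 := key ℓ le_rfl
  have h2 : tup (v ⟨ℓ, Nat.lt_succ_of_le le_rfl⟩) c ≤ M := by
    rw [← hsum (v ⟨ℓ, Nat.lt_succ_of_le le_rfl⟩)]
    exact Finset.single_le_sum (fun i _ => Nat.zero_le _) (Finset.mem_univ c)
  omega
end
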